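/- arXiv:1210.7469 — 2 statements merged into one kernel-verified Lean document; each statement's English description precedes it below -/
import Mathlib

section
/- Let Φ be a NCIFS. For each n ≥ 1 let 𝒰_n be a covering of the limit set of the shifted system Ψ_n (defined by Ψ_n^(j) = Φ^(n+j-1)), and let S(𝒰_n, t) = Σ_{U ∈ 𝒰_n} diam(U)^t. If t ≥ 0 satisfies liminf_{n→∞} Z_{n-1}(t)·S(𝒰_n, t) < ∞, then the t-dimensional Hausdorff measure of J(Φ) is finite, and in particular HD(J(Φ)) ≤ t. -/
open Metric Set Filter Topology MeasureTheory
open scoped ENNReal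

noncomputable section

/-- A non-autonomous conformal iterated function system (NCIFS) on a compact subset `X` of
`ℝ^d`, encoded via the composed maps `wMap m n ω` associated with finite words `ω` occupying
levels `m, m+1, …, n-1`, together with their conformal derivative norms `segN m n ω = ‖Dφ_ω‖`.
The fields record the standing assumptions: the open set condition, bounded distortion with
constant `K` (both for derivative norms of split words and as two-sided Lipschitz bounds),
and uniform contraction with constant `η < 1`. -/
structure NCIFS (d : ℕ) where
  X : Set (EuclideanSpace ℝ (Fin d))
  hX_compact : IsCompact X
  hX_nonempty : X.Nonempty
  hX_regular : closure (interior X) = X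
  hX_convex : Convex ℝ X
  I : ℕ → Type
  hI_ne : ∀ n, Nonempty (I n)
  K : ℝ
  hK : 1 ≤ K
  η : ℝ
  hη_pos : 0 < η
  hη_lt : η < 1
  /-- `segN m n ω` is the derivative norm `‖Dφ_ω‖` of the word `ω` on levels `m, …, n-1`. -/
  segN : (m n : ℕ) → ((j : Finset.Ico m n) → I j) → ℝ
  segN_pos : ∀ m n ω, 0 < segN m n ω
  /-- uniform contraction -/
  segN_contract : ∀ m n ω, segN m n ω ≤ η ^ (n - m)
  /-- submultiplicativity and bounded distortion for derivative norms of split words -/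
  segN_split : ∀ m k n, m ≤ k → k ≤ n →
      ∀ (ω : (j : Finset.Ico m n) → I j) (ω₁ : (j : Finset.Ico m k) → I j)
        (ω₂ : (j : Finset.Ico k n) → I j),
        (∀ (j : ℕ) (h₁ : j ∈ Finset.Ico m k) (h₂ : j ∈ Finset.Ico m n),
            ω₁ ⟨j, h₁⟩ = ω ⟨j, h₂⟩) →
        (∀ (j : ℕ) (h₁ : j ∈ Finset.Ico k n) (h₂ : j ∈ Finset.Ico m n),
            ω₂ ⟨j, h₁⟩ = ω ⟨j, h₂⟩) →
        segN m n ω ≤ segN m k ω₁ * segN k n ω₂ ∧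
          segN m k ω₁ * segN k n ω₂ ≤ K * segN m n ω
  /-- the conformal contraction associated to the word `ω` on levels `m, …, n-1` -/
  wMap : (m n : ℕ) → ((j : Finset.Ico m n) → I j) →
      EuclideanSpace ℝ (Fin d) → EuclideanSpace ℝ (Fin d)
  wMap_id : ∀ m (ω : (j : Finset.Ico m m) → I j) x, wMap m m ω x = x
  wMap_mapsTo : ∀ m n ω, MapsTo (wMap m n ω) X X
  /-- upper conformal bound: `φ_ω` is `‖Dφ_ω‖`-Lipschitz on `X` -/
  wMap_lip : ∀ m n ω, ∀ x ∈ X, ∀ y ∈ X,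
      dist (wMap m n ω x) (wMap m n ω y) ≤ segN m n ω * dist x y
  /-- lower conformal bound (bounded distortion) -/
  wMap_colip : ∀ m n ω, ∀ x ∈ X, ∀ y ∈ X,
      segN m n ω / K * dist x y ≤ dist (wMap m n ω x) (wMap m n ω y)
  /-- compatibility of the maps under splitting of words -/
  wMap_comp : ∀ m k n, m ≤ k → k ≤ n →
      ∀ (ω : (j : Finset.Ico m n) → I j) (ω₁ : (j : Finset.Ico m k) → I j)
        (ω₂ : (j : Finset.Ico k n) → I j),
        (∀ (j : ℕ) (h₁ : j ∈ Finset.Ico m k) (h₂ : j ∈ Finset.Ico m n),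
            ω₁ ⟨j, h₁⟩ = ω ⟨j, h₂⟩) →
        (∀ (j : ℕ) (h₁ : j ∈ Finset.Ico k n) (h₂ : j ∈ Finset.Ico m n),
            ω₂ ⟨j, h₁⟩ = ω ⟨j, h₂⟩) →
        ∀ x ∈ X, wMap m n ω x = wMap m k ω₁ (wMap k n ω₂ x)
  /-- the open set condition -/
  osc : ∀ n (a b : (j : Finset.Ico n (n+1)) → I j), a ≠ b →
      Disjoint (wMap n (n+1) a '' interior X) (wMap n (n+1) b '' interior X)

namespace NCIFS

variable {d : ℕ} (Φ : NCIFS d)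

/-- Words occupying levels `m, …, n-1`. -/
abbrev Word (m n : ℕ) := (j : Finset.Ico m n) → Φ.I j

instance (m n : ℕ) : Nonempty (Φ.Word m n) :=
  ⟨fun j => Classical.choice (Φ.hI_ne j)⟩

/-- The one-letter word at level `n` given by the index `i`. -/
def single (n : ℕ) (i : Φ.I n) : Φ.Word n (n+1) :=
  fun j => cast (congrArg Φ.I (show n = (j : ℕ) by
    have := Finset.mem_Ico.mp j.2; omega)) i

/-- `‖Dφ_i^{(n)}‖`, the derivative norm of the single map with index `i` at level `n`. -/
def Dnorm (n : ℕ) (i : Φ.I n) : ℝ := Φ.segN n (n+1) (Φ.single n i)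

/-- The partition function `Z_n(t) = Σ_{ω ∈ I^n} ‖Dφ_ω‖^t`, valued in `[0,∞]`. -/
def Z (n : ℕ) (t : ℝ) : ℝ≥0∞ := ∑' ω : Φ.Word 0 n, ENNReal.ofReal (Φ.segN 0 n ω ^ t)

/-- The lower pressure `P̲(t) = liminf (1/n) log Z_n(t)`, valued in `[-∞,∞]`. -/
def lowP (t : ℝ) : EReal :=
  liminf (fun n : ℕ => (Φ.Z n t).log * (((n : ℝ)⁻¹ : ℝ) : EReal)) atTop

/-- The upper pressure `P̄(t) = limsup (1/n) log Z_n(t)`. -/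
def upP (t : ℝ) : EReal :=
  limsup (fun n : ℕ => (Φ.Z n t).log * (((n : ℝ)⁻¹ : ℝ) : EReal)) atTop

/-- The Bowen dimension `B(Φ) = sup {t ≥ 0 : P̲(t) > 0}` (and `0` if there is no such `t`). -/
def Bdim : ℝ≥0∞ := ⨆ t : {t : ℝ // 0 ≤ t ∧ (0 : EReal) < Φ.lowP t}, ENNReal.ofReal t.1

/-- The limit set `J(Φ) = ⋂_n ⋃_{ω ∈ I^n} φ_ω(X)`. -/
def limitSet : Set (EuclideanSpace ℝ (Fin d)) :=
  ⋂ n, ⋃ ω : Φ.Word 0 n, Φ.wMap 0 n ω '' Φ.X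

/-- The minimal derivative norm `c̲_n` at level `n`. -/
def cmin (n : ℕ) : ℝ := ⨅ i : Φ.I n, Φ.Dnorm n i

/-- The maximal derivative norm `c̄_n` at level `n`. -/
def cmax (n : ℕ) : ℝ := ⨆ i : Φ.I n, Φ.Dnorm n i

/-- `ρ_n`, the maximal ratio of derivative norms at level `n`. -/
def ρ (n : ℕ) : ℝ := Φ.cmax n / Φ.cmin n

/-- The modified partition function
`Z̃_n(t) = Z_{n-1}(t) · (#I^{(n)})^{t/d} · c̲_n^t`. -/
def Zt (n : ℕ) (t : ℝ) : ℝ≥0∞ :=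
  Φ.Z (n - 1) t * ENNReal.ofReal ((Nat.card (Φ.I n) : ℝ) ^ (t / (d : ℝ)) * Φ.cmin n ^ t)

/-- `P̃(t) = liminf (1/n) log Z̃_n(t)`. -/
def tP (t : ℝ) : EReal :=
  liminf (fun n : ℕ => (Φ.Zt n t).log * (((n : ℝ)⁻¹ : ℝ) : EReal)) atTop

end NCIFS

/-- The limit set of the shifted system `Ψ_n` with `Ψ_n^{(j)} = Φ^{(n+j-1)}`,
i.e. of the system obtained by discarding the first `n` levels. -/
def NCIFS.shiftedLimitSet {d : ℕ} (Φ : NCIFS d) (n : ℕ) : Set (EuclideanSpace ℝ (Fin d)) :=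
  ⋂ k, ⋃ ω : Φ.Word n (n + k), Φ.wMap n (n + k) ω '' Φ.X

/-!
By the open set condition and bounded distortion, distinct cylinders `φ_ω(X)` of one generation
overlap in null sets of the Hausdorff `d`-measure (a Haar measure on `ℝ^d`), and near any of its
points a cylinder contains the image of a ball whose measure is comparable to the `d`-th power of
any scale below `‖Dφ_ω‖`. Packing these sets shows that there are countably many words and that a
point lies in boundedly many cylinders of a given generation. The latter gives
`J(Φ) ⊆ ⋃_{|α| = n} φ_α(J(Ψ_n))`, so the sets `φ_α(U)`, `U ∈ 𝒰_n`, cover `J(Φ)` with mesh at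
most `η^n diam X` and `t`-sum at most `Z_n(t) S(𝒰_n, t)`; letting `n → ∞` bounds `H^t(J(Φ))` by
the liminf.
-/

theorem Convex.closedBall_lineMap_subset {F : Type*} [NormedAddCommGroup F] [NormedSpace ℝ F]
    {s : Set F} (hs : Convex ℝ s) {v x : F} {r c : ℝ}
    (hv : v ∈ s) (hx : closedBall x r ⊆ s) (hc₀ : 0 < c) (hc₁ : c ≤ 1) :
    closedBall (AffineMap.lineMap v x c) (c * r) ⊆ s := by
  intro u hu
  set z := x + c⁻¹ • (u - AffineMap.lineMap v x c)
  have hz : z ∈ closedBall x r := by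
    rw [mem_closedBall, dist_eq_norm, add_sub_cancel_left, norm_smul, Real.norm_eq_abs,
      abs_of_pos (inv_pos.2 hc₀), ← dist_eq_norm, inv_mul_le_iff₀ hc₀]
    exact mem_closedBall.1 hu
  have hu_eq : u = AffineMap.lineMap v z c := by
    simp only [z, AffineMap.lineMap_apply_module, smul_add, smul_smul, mul_inv_cancel₀ hc₀.ne',
      one_smul]
    abel
  rw [hu_eq]
  exact hs.lineMap_mem hv (hx hz) ⟨hc₀.le, hc₁⟩

theorem MeasureTheory.card_mul_le_measure_of_pairwise_aedisjoint {α ι : Type*}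
    [MeasurableSpace α] {μ : Measure α} {I : Finset ι} {S : ι → Set α} {B : Set α} {m : ℝ≥0∞}
    (hdisj : (I : Set ι).Pairwise (Function.onFun (AEDisjoint μ) S))
    (hmeas : ∀ i ∈ I, NullMeasurableSet (S i) μ) (hB : ∀ i ∈ I, S i ⊆ B)
    (hm : ∀ i ∈ I, m ≤ μ (S i)) : I.card * m ≤ μ B :=
  calc (I.card : ℝ≥0∞) * m = ∑ _i ∈ I, m := by rw [Finset.sum_const, nsmul_eq_mul]
    _ ≤ ∑ i ∈ I, μ (S i) := Finset.sum_le_sum hm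
    _ = μ (⋃ i ∈ I, S i) := (measure_biUnion_finset₀ hdisj hmeas).symm
    _ ≤ μ B := measure_mono (iUnion₂_subset hB)

theorem Set.Finite.exists_forall_of_antitone {α : Type*} {W : Set α} (hW : W.Finite)
    {P : ℕ → α → Prop} (hP : ∀ a, Antitone (P · a)) (h : ∀ k, ∃ a ∈ W, P k a) :
    ∃ a ∈ W, ∀ k, P k a := by
  by_contra! hcon
  have hev : ∀ a ∈ W, ∀ᶠ k in atTop, ¬ P k a := fun a ha => by
    obtain ⟨k, hk⟩ := hcon a ha
    exact eventually_atTop.2 ⟨k, fun j hj hPj => hk (hP a hj hPj)⟩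
  obtain ⟨k, hk⟩ := ((eventually_all_finite hW).2 hev).exists
  obtain ⟨a, ha, hPa⟩ := h k
  exact hk a ha hPa

theorem EuclideanSpace.hausdorffMeasure_closedBall {d : ℕ} (x : EuclideanSpace ℝ (Fin d))
    {r : ℝ} (hr : 0 ≤ r) :
    μH[(d : ℝ)] (closedBall x r) =
      ENNReal.ofReal (r ^ d) * μH[(d : ℝ)] (closedBall (0 : EuclideanSpace ℝ (Fin d)) 1) := by
  rw [Measure.addHaar_closedBall' _ x hr, finrank_euclideanSpace_fin]

namespace NCIFS

variable {d : ℕ} (Φ : NCIFS d)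

local notation "E" => EuclideanSpace ℝ (Fin d)

local notation "μ" => (μH[(d : ℝ)] : Measure E)

def takeWord {m n : ℕ} (k : ℕ) (hkn : k ≤ n) (ω : Φ.Word m n) : Φ.Word m k :=
  fun j => ω ⟨j, Finset.mem_Ico.2
    ⟨(Finset.mem_Ico.1 j.2).1, (Finset.mem_Ico.1 j.2).2.trans_le hkn⟩⟩

def dropWord {m n : ℕ} (k : ℕ) (hmk : m ≤ k) (ω : Φ.Word m n) : Φ.Word k n :=
  fun j => ω ⟨j, Finset.mem_Ico.2
    ⟨hmk.trans (Finset.mem_Ico.1 j.2).1, (Finset.mem_Ico.1 j.2).2⟩⟩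

theorem word_ext_take_drop {m n : ℕ} (k : ℕ) (hmk : m ≤ k) (hkn : k ≤ n) {α β : Φ.Word m n}
    (htake : Φ.takeWord k hkn α = Φ.takeWord k hkn β)
    (hdrop : Φ.dropWord k hmk α = Φ.dropWord k hmk β) : α = β := by
  funext ⟨j, hj⟩
  rcases lt_or_ge j k with hjk | hjk
  · exact congrFun htake ⟨j, Finset.mem_Ico.2 ⟨(Finset.mem_Ico.1 hj).1, hjk⟩⟩
  · exact congrFun hdrop ⟨j, Finset.mem_Ico.2 ⟨hjk, (Finset.mem_Ico.1 hj).2⟩⟩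

theorem wMap_eq_comp_take_drop {m n : ℕ} (k : ℕ) (hmk : m ≤ k) (hkn : k ≤ n)
    (ω : Φ.Word m n) {x : E} (hx : x ∈ Φ.X) :
    Φ.wMap m n ω x = Φ.wMap m k (Φ.takeWord k hkn ω) (Φ.wMap k n (Φ.dropWord k hmk ω) x) :=
  Φ.wMap_comp m k n hmk hkn ω _ _ (fun _ _ _ => rfl) (fun _ _ _ => rfl) x hx

def cylinder (m n : ℕ) (ω : Φ.Word m n) : Set E := Φ.wMap m n ω '' Φ.X

theorem cylinder_subset_X (m n : ℕ) (ω : Φ.Word m n) : Φ.cylinder m n ω ⊆ Φ.X :=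
  (Φ.wMap_mapsTo m n ω).image_subset

theorem cylinder_eq_image_cylinder {m n : ℕ} (k : ℕ) (hmk : m ≤ k) (hkn : k ≤ n)
    (ω : Φ.Word m n) :
    Φ.cylinder m n ω =
      Φ.wMap m k (Φ.takeWord k hkn ω) '' Φ.cylinder k n (Φ.dropWord k hmk ω) := by
  rw [cylinder, cylinder, ← image_comp]
  exact image_congr fun x hx => Φ.wMap_eq_comp_take_drop k hmk hkn ω hx

theorem K_pos : 0 < Φ.K := one_pos.trans_le Φ.hK

theorem lipschitzOnWith_wMap (m n : ℕ) (ω : Φ.Word m n) :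
    LipschitzOnWith (Φ.segN m n ω).toNNReal (Φ.wMap m n ω) Φ.X :=
  LipschitzOnWith.of_dist_le_mul fun x hx y hy => by
    rw [Real.coe_toNNReal _ (Φ.segN_pos m n ω).le]
    exact Φ.wMap_lip m n ω x hx y hy

theorem injOn_wMap (m n : ℕ) (ω : Φ.Word m n) : InjOn (Φ.wMap m n ω) Φ.X := by
  intro x hx y hy hxy
  have h := Φ.wMap_colip m n ω x hx y hy
  rw [hxy, dist_self] at h
  have hpos : 0 < Φ.segN m n ω / Φ.K := div_pos (Φ.segN_pos m n ω) Φ.K_pos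
  exact dist_le_zero.1 (nonpos_of_mul_nonpos_right h hpos)

theorem lipschitzOnWith_invFunOn_wMap (m n : ℕ) (ω : Φ.Word m n) :
    LipschitzOnWith (Φ.K / Φ.segN m n ω).toNNReal (Function.invFunOn (Φ.wMap m n ω) Φ.X)
      (Φ.cylinder m n ω) := by
  have hseg := Φ.segN_pos m n ω
  refine LipschitzOnWith.of_dist_le_mul ?_
  rintro _ ⟨x, hx, rfl⟩ _ ⟨y, hy, rfl⟩
  have hcolip := Φ.wMap_colip m n ω x hx y hy
  rw [div_mul_eq_mul_div, div_le_iff₀ Φ.K_pos] at hcolip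
  rw [(Φ.injOn_wMap m n ω).leftInvOn_invFunOn hx, (Φ.injOn_wMap m n ω).leftInvOn_invFunOn hy,
    Real.coe_toNNReal _ (div_pos Φ.K_pos hseg).le, div_mul_eq_mul_div, le_div_iff₀ hseg]
  linarith

theorem ediam_image_wMap_le (m n : ℕ) (ω : Φ.Word m n) {s : Set E} (hs : s ⊆ Φ.X) :
    ediam (Φ.wMap m n ω '' s) ≤ ENNReal.ofReal (Φ.segN m n ω) * ediam s := by
  refine ediam_le ?_
  rintro _ ⟨x, hx, rfl⟩ _ ⟨y, hy, rfl⟩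
  exact (Φ.lipschitzOnWith_wMap m n ω (hs hx) (hs hy)).trans
    (mul_le_mul_right (edist_le_ediam_of_mem hx hy) _)

theorem measure_image_wMap_eq_zero {m n : ℕ} (ω : Φ.Word m n) {s : Set E} (hs : s ⊆ Φ.X)
    (h : μ s = 0) : μ (Φ.wMap m n ω '' s) = 0 := by
  have hle := ((Φ.lipschitzOnWith_wMap m n ω).mono hs).hausdorffMeasure_image_le d.cast_nonneg
  rwa [h, mul_zero, nonpos_iff_eq_zero] at hle

theorem le_measure_image_wMap {m n : ℕ} (ω : Φ.Word m n) {s : Set E} (hs : s ⊆ Φ.X) :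
    ENNReal.ofReal (Φ.segN m n ω / Φ.K) ^ d * μ s ≤ μ (Φ.wMap m n ω '' s) := by
  have hinv := ((Φ.lipschitzOnWith_invFunOn_wMap m n ω).mono
    (image_mono hs)).hausdorffMeasure_image_le d.cast_nonneg
  rw [(Φ.injOn_wMap m n ω).invFunOn_image hs, ENNReal.rpow_natCast] at hinv
  have hcancel :
      ENNReal.ofReal (Φ.segN m n ω / Φ.K) * ENNReal.ofReal (Φ.K / Φ.segN m n ω) = 1 := by
    rw [← ENNReal.ofReal_mul (div_pos (Φ.segN_pos m n ω) Φ.K_pos).le,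
      div_mul_div_cancel₀ Φ.K_pos.ne', div_self (Φ.segN_pos m n ω).ne', ENNReal.ofReal_one]
  calc ENNReal.ofReal (Φ.segN m n ω / Φ.K) ^ d * μ s
      ≤ ENNReal.ofReal (Φ.segN m n ω / Φ.K) ^ d *
          (ENNReal.ofReal (Φ.K / Φ.segN m n ω) ^ d * μ (Φ.wMap m n ω '' s)) :=
        mul_le_mul_right hinv _
    _ = μ (Φ.wMap m n ω '' s) := by rw [← mul_assoc, ← mul_pow, hcancel, one_pow, one_mul]

theorem isCompact_cylinder (m n : ℕ) (ω : Φ.Word m n) : IsCompact (Φ.cylinder m n ω) :=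
  Φ.hX_compact.image_of_continuousOn (Φ.lipschitzOnWith_wMap m n ω).continuousOn

theorem measure_cylinder_diff_image_interior (m n : ℕ) (ω : Φ.Word m n) :
    μ (Φ.cylinder m n ω \ Φ.wMap m n ω '' interior Φ.X) = 0 := by
  refine measure_mono_null ?_ (Φ.measure_image_wMap_eq_zero ω
    Φ.hX_compact.isClosed.frontier_subset (Φ.hX_convex.addHaar_frontier μ))
  rintro _ ⟨⟨x, hx, rfl⟩, hint⟩
  exact ⟨x, ⟨subset_closure hx, fun h => hint ⟨x, h, rfl⟩⟩, rfl⟩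

theorem measure_cylinder_inter_cylinder_succ (m : ℕ) {a b : Φ.Word m (m + 1)} (hab : a ≠ b) :
    μ (Φ.cylinder m (m + 1) a ∩ Φ.cylinder m (m + 1) b) = 0 := by
  refine measure_mono_null ?_ (measure_union_null
    (Φ.measure_cylinder_diff_image_interior m (m + 1) a)
    (Φ.measure_cylinder_diff_image_interior m (m + 1) b))
  rintro z ⟨hza, hzb⟩
  by_cases h : z ∈ Φ.wMap m (m + 1) a '' interior Φ.X
  · exact Or.inr ⟨hzb, fun h' => (Φ.osc m a b hab).ne_of_mem h h' rfl⟩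
  · exact Or.inl ⟨hza, h⟩

theorem measure_cylinder_inter_cylinder {m n : ℕ} {α β : Φ.Word m n} (hαβ : α ≠ β) :
    μ (Φ.cylinder m n α ∩ Φ.cylinder m n β) = 0 := by
  induction hk : n - m generalizing m with
  | zero => exact absurd (funext fun j => absurd (Finset.mem_Ico.1 j.2) (by omega)) hαβ
  | succ k ih =>
    have h₁ : m ≤ m + 1 := m.le_succ
    have h₂ : m + 1 ≤ n := by omega
    rw [Φ.cylinder_eq_image_cylinder (m + 1) h₁ h₂ α,
      Φ.cylinder_eq_image_cylinder (m + 1) h₁ h₂ β]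
    by_cases hhead : Φ.takeWord (m + 1) h₂ α = Φ.takeWord (m + 1) h₂ β
    · have htail : Φ.dropWord (m + 1) h₁ α ≠ Φ.dropWord (m + 1) h₁ β := fun h =>
        hαβ (Φ.word_ext_take_drop _ h₁ h₂ hhead h)
      rw [hhead, ← (Φ.injOn_wMap _ _ _).image_inter (Φ.cylinder_subset_X _ _ _)
        (Φ.cylinder_subset_X _ _ _)]
      exact Φ.measure_image_wMap_eq_zero _ (inter_subset_left.trans (Φ.cylinder_subset_X _ _ _))
        (ih htail (by omega))
    · exact measure_mono_null (inter_subset_inter (image_mono (Φ.cylinder_subset_X _ _ _))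
        (image_mono (Φ.cylinder_subset_X _ _ _))) (Φ.measure_cylinder_inter_cylinder_succ m hhead)

theorem exists_closedBall_subset_X : ∃ x₀ : E, ∃ r > 0, closedBall x₀ r ⊆ Φ.X := by
  obtain ⟨x₀, hx₀⟩ : (interior Φ.X).Nonempty :=
    closure_nonempty_iff.1 (Φ.hX_regular.symm ▸ Φ.hX_nonempty)
  obtain ⟨r, hr, hsub⟩ := nhds_basis_closedBall.mem_iff.1 (isOpen_interior.mem_nhds hx₀)
  exact ⟨x₀, r, hr, hsub.trans interior_subset⟩

theorem exists_compact_subset_cylinder_measure_ge {m n : ℕ} (ω : Φ.Word m n) {x₀ : E} {r : ℝ}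
    (hr : 0 ≤ r) (hball : closedBall x₀ r ⊆ Φ.X) {x : E} (hx : x ∈ Φ.cylinder m n ω) {s : ℝ}
    (hs₀ : 0 < s) (hs : s ≤ Φ.segN m n ω) :
    ∃ S ⊆ Φ.cylinder m n ω, IsCompact S ∧ S ⊆ closedBall x (s * (r + diam Φ.X)) ∧
      ENNReal.ofReal ((s * r / Φ.K) ^ d) * μ (closedBall 0 1) ≤ μ S := by
  obtain ⟨v, hv, rfl⟩ := hx
  have hseg := Φ.segN_pos m n ω
  -- a ball shrunk by `c` towards `v` is mapped onto a set of scale `s`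
  set c := s / Φ.segN m n ω
  have hc₀ : 0 < c := div_pos hs₀ hseg
  set w := AffineMap.lineMap v x₀ c
  have hsub : closedBall w (c * r) ⊆ Φ.X :=
    Φ.hX_convex.closedBall_lineMap_subset hv hball hc₀ ((div_le_one hseg).2 hs)
  refine ⟨Φ.wMap m n ω '' closedBall w (c * r), image_mono hsub,
    (isCompact_closedBall _ _).image_of_continuousOn
      ((Φ.lipschitzOnWith_wMap m n ω).continuousOn.mono hsub), ?_, ?_⟩
  · rintro _ ⟨u, hu, rfl⟩
    have hwv : dist w v ≤ c * diam Φ.X := by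
      rw [dist_lineMap_left, Real.norm_of_nonneg hc₀.le]
      exact mul_le_mul_of_nonneg_left
        (dist_le_diam_of_mem Φ.hX_compact.isBounded hv (hball (mem_closedBall_self hr))) hc₀.le
    rw [mem_closedBall]
    calc dist (Φ.wMap m n ω u) (Φ.wMap m n ω v) ≤ Φ.segN m n ω * dist u v :=
          Φ.wMap_lip m n ω u (hsub hu) v hv
      _ ≤ Φ.segN m n ω * (c * r + c * diam Φ.X) :=
          mul_le_mul_of_nonneg_left ((dist_triangle u w v).trans
            (add_le_add (mem_closedBall.1 hu) hwv)) hseg.le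
      _ = s * (r + diam Φ.X) := by simp only [c]; field_simp
  · calc ENNReal.ofReal ((s * r / Φ.K) ^ d) * μ (closedBall 0 1)
        = ENNReal.ofReal (Φ.segN m n ω / Φ.K) ^ d *
            (ENNReal.ofReal ((c * r) ^ d) * μ (closedBall 0 1)) := by
          rw [← mul_assoc, ← ENNReal.ofReal_pow (div_pos hseg Φ.K_pos).le,
            ← ENNReal.ofReal_mul (pow_nonneg (div_pos hseg Φ.K_pos).le _), ← mul_pow]
          congr 3
          simp only [c]
          field_simp
      _ = ENNReal.ofReal (Φ.segN m n ω / Φ.K) ^ d * μ (closedBall w (c * r)) := by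
          rw [EuclideanSpace.hausdorffMeasure_closedBall w (by positivity)]
      _ ≤ μ (Φ.wMap m n ω '' closedBall w (c * r)) := Φ.le_measure_image_wMap ω hsub

theorem measure_cylinder_pos (m n : ℕ) (ω : Φ.Word m n) : 0 < μ (Φ.cylinder m n ω) := by
  obtain ⟨x₀, r, hr, hball⟩ := Φ.exists_closedBall_subset_X
  obtain ⟨S, hS, -, -, hSμ⟩ := Φ.exists_compact_subset_cylinder_measure_ge ω hr.le hball
    (mem_image_of_mem _ (hball (mem_closedBall_self hr.le))) (Φ.segN_pos m n ω) le_rfl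
  refine lt_of_lt_of_le ?_ (hSμ.trans (measure_mono hS))
  exact ENNReal.mul_pos (ENNReal.ofReal_pos.2 (pow_pos (div_pos (mul_pos (Φ.segN_pos m n ω) hr)
    Φ.K_pos) d)).ne' (measure_closedBall_pos μ 0 one_pos).ne'

instance countable_word (m n : ℕ) : Countable (Φ.Word m n) := by
  have hpos := Measure.countable_meas_pos_of_disjoint_of_meas_iUnion_ne_top₀ μ
    (fun ω => (Φ.isCompact_cylinder m n ω).measurableSet.nullMeasurableSet)
    (fun _ _ h => Φ.measure_cylinder_inter_cylinder h)
    ((measure_mono (iUnion_subset (Φ.cylinder_subset_X m n))).trans_lt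
      Φ.hX_compact.measure_lt_top).ne
  simpa only [Φ.measure_cylinder_pos, ofPred_true, countable_univ_iff] using hpos

theorem card_le_of_forall_mem_cylinder {m n : ℕ} {x₀ : E} {r : ℝ} (hr : 0 < r)
    (hball : closedBall x₀ r ⊆ Φ.X) {x : E} {I : Finset (Φ.Word m n)}
    (hI : ∀ ω ∈ I, x ∈ Φ.cylinder m n ω) :
    (I.card : ℝ) ≤ (Φ.K * (r + diam Φ.X) / r) ^ d := by
  rcases I.eq_empty_or_nonempty with rfl | hne
  · simp only [Finset.card_empty, Nat.cast_zero]
    exact pow_nonneg (div_nonneg (mul_nonneg Φ.K_pos.le (by positivity)) hr.le) d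
  -- all chunks are taken at the scale of the smallest map, so that they fit in one ball
  set s := I.inf' hne fun ω => Φ.segN m n ω
  have hs₀ : 0 < s := (Finset.lt_inf'_iff hne).2 fun ω _ => Φ.segN_pos m n ω
  choose! S hSsub hScpt hSball hSμ using fun ω hω =>
    Φ.exists_compact_subset_cylinder_measure_ge ω hr.le hball (hI ω hω) hs₀ (I.inf'_le _ hω)
  have hpack := card_mul_le_measure_of_pairwise_aedisjoint
    (fun a ha b hb hab => measure_mono_null (inter_subset_inter (hSsub a ha) (hSsub b hb))
      (Φ.measure_cylinder_inter_cylinder hab))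
    (fun ω hω => (hScpt ω hω).measurableSet.nullMeasurableSet) hSball hSμ
  rw [EuclideanSpace.hausdorffMeasure_closedBall x (by positivity), ← mul_assoc,
    ENNReal.mul_le_mul_iff_left (measure_closedBall_pos μ 0 one_pos).ne'
      (isCompact_closedBall _ _).measure_lt_top.ne,
    ← ENNReal.ofReal_natCast, ← ENNReal.ofReal_mul (Nat.cast_nonneg _),
    ENNReal.ofReal_le_ofReal_iff (by positivity)] at hpack
  rwa [show Φ.K * (r + diam Φ.X) / r = s * (r + diam Φ.X) / (s * r / Φ.K) by
      field_simp [Φ.K_pos.ne'],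
    div_pow, le_div_iff₀ (pow_pos (div_pos (mul_pos hs₀ hr) Φ.K_pos) d)]

theorem finite_setOf_mem_cylinder (m n : ℕ) (x : E) :
    {ω : Φ.Word m n | x ∈ Φ.cylinder m n ω}.Finite := by
  obtain ⟨x₀, r, hr, hball⟩ := Φ.exists_closedBall_subset_X
  by_contra hinf
  obtain ⟨I, hIsub, hIcard⟩ := Set.Infinite.exists_subset_card_eq hinf
    (⌈(Φ.K * (r + diam Φ.X) / r) ^ d⌉₊ + 1)
  have hle := (Φ.card_le_of_forall_mem_cylinder hr hball fun ω hω => hIsub hω).trans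
    (Nat.le_ceil _)
  rw [hIcard] at hle
  exact (lt_add_one _).not_ge (by exact_mod_cast hle)

theorem antitone_iUnion_cylinder (n : ℕ) :
    Antitone fun k => ⋃ β : Φ.Word n (n + k), Φ.cylinder n (n + k) β := by
  refine antitone_nat_of_succ_le fun k => iUnion_subset fun β => ?_
  rw [Φ.cylinder_eq_image_cylinder (n + k) (by omega) (by omega) β]
  exact (image_mono (Φ.cylinder_subset_X _ _ _)).trans (subset_iUnion (Φ.cylinder n (n + k)) _)

theorem limitSet_subset_iUnion_image_shiftedLimitSet (n : ℕ) :
    Φ.limitSet ⊆ ⋃ α : Φ.Word 0 n, Φ.wMap 0 n α '' (Φ.shiftedLimitSet n ∩ Φ.X) := by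
  intro x hx
  set A := fun k => ⋃ β : Φ.Word n (n + k), Φ.cylinder n (n + k) β
  have hstage : ∀ k, ∃ α ∈ {α : Φ.Word 0 n | x ∈ Φ.cylinder 0 n α},
      x ∈ Φ.wMap 0 n α '' (A k ∩ Φ.X) := fun k => by
    obtain ⟨ω, hω⟩ := mem_iUnion.1 (mem_iInter.1 hx (n + k))
    rw [← cylinder, Φ.cylinder_eq_image_cylinder n n.zero_le (by omega)] at hω
    exact ⟨_, image_mono (Φ.cylinder_subset_X _ _ _) hω,
      image_mono (subset_inter (subset_iUnion (Φ.cylinder n (n + k)) _)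
        (Φ.cylinder_subset_X _ _ _)) hω⟩
  -- a point lies in finitely many cylinders, so one prefix `α` serves every stage
  obtain ⟨α, -, hα⟩ := (Φ.finite_setOf_mem_cylinder 0 n x).exists_forall_of_antitone
    (P := fun k α => x ∈ Φ.wMap 0 n α '' (A k ∩ Φ.X))
    (fun _ _ _ hjk h =>
      image_mono (inter_subset_inter_left _ (Φ.antitone_iUnion_cylinder n hjk)) h)
    hstage
  rw [← mem_iInter, ← ((Φ.injOn_wMap 0 n α).mono (iUnion_subset fun _ =>
    inter_subset_right)).image_iInter_eq, ← iInter_inter] at hα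
  exact mem_iUnion.2 ⟨α, hα⟩

theorem tsum_ediam_image_rpow_le {t : ℝ} (ht : 0 ≤ t) (n : ℕ) {ι : Type*} (U : ι → Set E) :
    ∑' p : Φ.Word 0 n × ι, ediam (Φ.wMap 0 n p.1 '' (U p.2 ∩ Φ.X)) ^ t ≤
      Φ.Z n t * ∑' i, ediam (U i) ^ t :=
  calc ∑' p : Φ.Word 0 n × ι, ediam (Φ.wMap 0 n p.1 '' (U p.2 ∩ Φ.X)) ^ t
      ≤ ∑' p : Φ.Word 0 n × ι, ENNReal.ofReal (Φ.segN 0 n p.1) ^ t * ediam (U p.2) ^ t :=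
        ENNReal.tsum_le_tsum fun p => by
          rw [← ENNReal.mul_rpow_of_nonneg _ _ ht]
          exact ENNReal.rpow_le_rpow ((Φ.ediam_image_wMap_le 0 n p.1 inter_subset_right).trans
            (mul_le_mul_right (ediam_mono inter_subset_left) _)) ht
    _ = Φ.Z n t * ∑' i, ediam (U i) ^ t := by
        rw [ENNReal.tsum_prod (f := fun ω i => ENNReal.ofReal (Φ.segN 0 n ω) ^ t * ediam (U i) ^ t),
          Z, ← ENNReal.tsum_mul_right]
        refine tsum_congr fun ω => ?_
        rw [ENNReal.tsum_mul_left, ENNReal.ofReal_rpow_of_pos (Φ.segN_pos 0 n ω)]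

theorem tendsto_ofReal_η_pow_mul_ediam_X :
    Tendsto (fun n => ENNReal.ofReal (Φ.η ^ n) * ediam Φ.X) atTop (𝓝 0) := by
  have h := ENNReal.Tendsto.mul_const (ENNReal.tendsto_ofReal
    (tendsto_pow_atTop_nhds_zero_of_lt_one Φ.hη_pos.le Φ.hη_lt))
    (Or.inr Φ.hX_compact.isBounded.ediam_ne_top)
  rwa [ENNReal.ofReal_zero, zero_mul] at h

theorem hausdorffMeasure_limitSet_le_liminf {t : ℝ} (ht : 0 ≤ t) {ι : ℕ → Type*}
    [∀ n, Countable (ι n)] (𝒰 : ∀ n, ι n → Set E)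
    (hcover : ∀ n, Φ.shiftedLimitSet n ⊆ ⋃ i, 𝒰 n i) :
    μH[t] Φ.limitSet ≤ liminf (fun n => Φ.Z n t * ∑' i, ediam (𝒰 n i) ^ t) atTop := by
  set V : ∀ n, Φ.Word 0 n × ι n → Set E := fun n p => Φ.wMap 0 n p.1 '' (𝒰 n p.2 ∩ Φ.X)
  have hV_cover : ∀ n, Φ.limitSet ⊆ ⋃ p, V n p := fun n x hx => by
    obtain ⟨α, y, ⟨hy, hyX⟩, rfl⟩ :=
      mem_iUnion.1 (Φ.limitSet_subset_iUnion_image_shiftedLimitSet n hx)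
    obtain ⟨i, hi⟩ := mem_iUnion.1 (hcover n hy)
    exact mem_iUnion.2 ⟨(α, i), y, ⟨hi, hyX⟩, rfl⟩
  have hV_diam : ∀ n p, ediam (V n p) ≤ ENNReal.ofReal (Φ.η ^ n) * ediam Φ.X := fun n p =>
    (Φ.ediam_image_wMap_le 0 n p.1 inter_subset_right).trans (mul_le_mul' (ENNReal.ofReal_le_ofReal
      (by simpa using Φ.segN_contract 0 n p.1)) (ediam_mono inter_subset_right))
  calc μH[t] Φ.limitSet ≤ liminf (fun n => ∑' p, ediam (V n p) ^ t) atTop :=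
        Measure.hausdorffMeasure_le_liminf_tsum t _ _ Φ.tendsto_ofReal_η_pow_mul_ediam_X V
          (.of_forall hV_diam) (.of_forall hV_cover)
    _ ≤ _ := liminf_le_liminf (.of_forall fun n => Φ.tsum_ediam_image_rpow_le ht n (𝒰 n))

end NCIFS

/-- If, for each `n`, `𝒰 n` is a (countable) covering of the limit set of the
shifted system starting at level `n`, with Hausdorff sum `S(𝒰_n,t) = Σ_U diam(U)^t`, and if
`liminf_n Z_{n-1}(t)·S(𝒰_n,t) < ∞`, then the `t`-dimensional Hausdorff measure of `J(Φ)` is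
finite; in particular `HD(J(Φ)) ≤ t`. -/
theorem NCIFS.dimH_le_of_covers {d : ℕ} (Φ : NCIFS d) (t : ℝ) (ht : 0 ≤ t)
    (𝒰 : ℕ → ℕ → Set (EuclideanSpace ℝ (Fin d)))
    (hcover : ∀ n, Φ.shiftedLimitSet n ⊆ ⋃ i, 𝒰 n i)
    (hliminf : liminf
        (fun n : ℕ => Φ.Z n t * ∑' i, EMetric.diam (𝒰 n i) ^ t) atTop < ⊤) :
    μH[t] Φ.limitSet < ⊤ ∧ dimH Φ.limitSet ≤ ENNReal.ofReal t := by
  have hfin := (Φ.hausdorffMeasure_limitSet_le_liminf ht 𝒰 hcover).trans_lt hliminf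
  refine ⟨hfin, dimH_le_of_hausdorffMeasure_ne_top ?_⟩
  rw [Real.coe_toNNReal t ht]
  exact hfin.ne
end
end

section
/- Let Φ be a weakly balanced finite NCIFS such that both limits a = lim_{n→∞} (1/n) log #I^(n) and b = lim_{n→∞} (1/n) log(1/c̄_n) exist, are finite and positive, where c̄_n = max_{i ∈ I^(n)} ‖Dφ_i^(n)‖. Then B(Φ) = a/b: the partition function Z_n(t) tends to infinity for t < a/b and to zero for t > a/b. -/
open Metric Set Filter Topology MeasureTheory
open scoped ENNReal

noncomputable section

/-!
By bounded distortion every word of length `n` has derivative norm between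
`∏_{k<n} c̲_k / K` and `∏_{k<n} c̄_k`, so `Z_n(t)` is squeezed between
`exp ∑_{k<n} (log #I^(k) + t log (c̲_k / K))` and `exp ∑_{k<n} (log #I^(k) + t log c̄_k)`.
By weak balance both summands grow like `(a - t b) k`, so the exponents divided by `n` tend
to `±∞` according to the sign of `a - t b`. Hence `Z_n(t) → ∞` and `P̲(t) = +∞` for
`t < a/b`, while `Z_n(t) → 0` and `P̲(t) = -∞` for `t > a/b`.
-/

lemma Filter.Tendsto.cesaro_atTop {f : ℕ → ℝ} (h : Tendsto f atTop atTop) :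
    Tendsto (fun n : ℕ => (∑ k ∈ Finset.range n, f k) / n) atTop atTop := by
  refine tendsto_atTop.2 fun M => ?_
  -- Cesàro applied to the truncation `min (f k) (M + 1)`, which tends to `M + 1`.
  have htrunc : Tendsto (fun k => min (f k) (M + 1)) atTop (𝓝 (M + 1)) :=
    tendsto_const_nhds.congr' <| (h.eventually_ge_atTop (M + 1)).mono fun k hk =>
      (min_eq_right hk).symm
  filter_upwards [htrunc.cesaro.eventually (eventually_ge_nhds (by linarith))] with n hn
  calc M ≤ (n : ℝ)⁻¹ * ∑ k ∈ Finset.range n, min (f k) (M + 1) := hn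
    _ ≤ (∑ k ∈ Finset.range n, f k) / n := by
      rw [div_eq_inv_mul]
      gcongr with k
      exact min_le_left _ _

lemma tendsto_sum_range_div_atTop_of_tendsto_div {f : ℕ → ℝ} {c : ℝ} (hc : 0 < c)
    (h : Tendsto (fun k : ℕ => f k / k) atTop (𝓝 c)) :
    Tendsto (fun n : ℕ => (∑ k ∈ Finset.range n, f k) / n) atTop atTop := by
  refine Tendsto.cesaro_atTop ?_
  refine (h.pos_mul_atTop hc tendsto_natCast_atTop_atTop).congr' ?_
  filter_upwards [eventually_ne_atTop 0] with k hk
  field_simp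

lemma tendsto_sum_range_div_atBot_of_tendsto_div {f : ℕ → ℝ} {c : ℝ} (hc : c < 0)
    (h : Tendsto (fun k : ℕ => f k / k) atTop (𝓝 c)) :
    Tendsto (fun n : ℕ => (∑ k ∈ Finset.range n, f k) / n) atTop atBot := by
  have hneg := tendsto_sum_range_div_atTop_of_tendsto_div (f := fun k => -f k) (neg_pos.2 hc)
    (by simpa only [neg_div] using h.neg)
  simpa only [Finset.sum_neg_distrib, neg_div, tendsto_neg_atTop_iff] using hneg

lemma tendsto_atTop_of_tendsto_div_natCast_atTop {v : ℕ → ℝ}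
    (h : Tendsto (fun n : ℕ => v n / n) atTop atTop) : Tendsto v atTop atTop := by
  refine (h.atTop_mul_atTop₀ tendsto_natCast_atTop_atTop).congr' ?_
  filter_upwards [eventually_ne_atTop 0] with n hn
  field_simp

lemma tendsto_atBot_of_tendsto_div_natCast_atBot {v : ℕ → ℝ}
    (h : Tendsto (fun n : ℕ => v n / n) atTop atBot) : Tendsto v atTop atBot := by
  have := tendsto_atTop_of_tendsto_div_natCast_atTop (v := fun n => -v n)
    (by simpa only [neg_div, tendsto_neg_atTop_iff] using h)
  simpa only [tendsto_neg_atTop_iff] using this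

section ENNReal

lemma EReal.mul_natCast_inv_le_of_le {x : EReal} {y : ℝ} (h : x ≤ y) (n : ℕ) :
    x * (((n : ℝ)⁻¹ : ℝ) : EReal) ≤ ((y / n : ℝ) : EReal) := by
  rw [div_eq_mul_inv, EReal.coe_mul]
  exact mul_le_mul_of_nonneg_right h (by positivity)

lemma EReal.le_mul_natCast_inv_of_le {x : EReal} {y : ℝ} (h : (y : EReal) ≤ x) (n : ℕ) :
    ((y / n : ℝ) : EReal) ≤ x * (((n : ℝ)⁻¹ : ℝ) : EReal) := by
  rw [div_eq_mul_inv, EReal.coe_mul]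
  exact mul_le_mul_of_nonneg_right h (by positivity)

lemma ENNReal.tsum_ofReal_const (α : Type*) [Finite α] (x : ℝ) :
    ∑' _ : α, ENNReal.ofReal x = ENNReal.ofReal (Nat.card α * x) := by
  rw [ENNReal.tsum_const, ENat.card_eq_coe_natCard, ENNReal.ofReal_mul (Nat.cast_nonneg _),
    ENNReal.ofReal_natCast, ENat.toENNReal_coe]

lemma ENNReal.le_log_of_ofReal_exp_le {x : ℝ≥0∞} {y : ℝ}
    (h : ENNReal.ofReal (Real.exp y) ≤ x) : (y : EReal) ≤ x.log := by
  simpa [ENNReal.log_ofReal_of_pos (Real.exp_pos y)] using ENNReal.log_monotone h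

lemma ENNReal.log_le_of_le_ofReal_exp {x : ℝ≥0∞} {y : ℝ}
    (h : x ≤ ENNReal.ofReal (Real.exp y)) : x.log ≤ y := by
  simpa [ENNReal.log_ofReal_of_pos (Real.exp_pos y)] using ENNReal.log_monotone h

lemma ENNReal.liminf_log_mul_inv_eq_top {u : ℕ → ℝ≥0∞} {v : ℕ → ℝ}
    (hv : Tendsto (fun n : ℕ => v n / n) atTop atTop)
    (h : ∀ᶠ n in atTop, ENNReal.ofReal (Real.exp (v n)) ≤ u n) :
    liminf (fun n : ℕ => (u n).log * (((n : ℝ)⁻¹ : ℝ) : EReal)) atTop = ⊤ :=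
  Tendsto.liminf_eq <| tendsto_nhds_top_mono (EReal.tendsto_coe_nhds_top_iff.2 hv) <|
    h.mono fun n hn => EReal.le_mul_natCast_inv_of_le (ENNReal.le_log_of_ofReal_exp_le hn) n

lemma ENNReal.liminf_log_mul_inv_eq_bot {u : ℕ → ℝ≥0∞} {v : ℕ → ℝ}
    (hv : Tendsto (fun n : ℕ => v n / n) atTop atBot)
    (h : ∀ᶠ n in atTop, u n ≤ ENNReal.ofReal (Real.exp (v n))) :
    liminf (fun n : ℕ => (u n).log * (((n : ℝ)⁻¹ : ℝ) : EReal)) atTop = ⊥ :=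
  Tendsto.liminf_eq <| tendsto_nhds_bot_mono (EReal.tendsto_coe_nhds_bot_iff.2 hv) <|
    h.mono fun n hn => EReal.mul_natCast_inv_le_of_le (ENNReal.log_le_of_le_ofReal_exp hn) n

variable {α : Type*} {l : Filter α} {u : α → ℝ≥0∞} {v : α → ℝ}

lemma ENNReal.tendsto_nhds_top_of_ofReal_exp_le (hv : Tendsto v l atTop)
    (h : ∀ᶠ x in l, ENNReal.ofReal (Real.exp (v x)) ≤ u x) : Tendsto u l (𝓝 ⊤) :=
  tendsto_nhds_top_mono (ENNReal.tendsto_ofReal_atTop.comp (Real.tendsto_exp_atTop.comp hv)) h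

lemma ENNReal.tendsto_nhds_zero_of_le_ofReal_exp (hv : Tendsto v l atBot)
    (h : ∀ᶠ x in l, u x ≤ ENNReal.ofReal (Real.exp (v x))) : Tendsto u l (𝓝 0) := by
  have hexp := ENNReal.tendsto_ofReal (Real.tendsto_exp_atBot.comp hv)
  rw [ENNReal.ofReal_zero] at hexp
  exact tendsto_of_tendsto_of_tendsto_of_le_of_le' tendsto_const_nhds hexp
    (Eventually.of_forall fun _ => zero_le) h

end ENNReal

namespace NCIFS

variable {d : ℕ} (Φ : NCIFS d)

lemma Bdim_eq_ofReal {s : ℝ} (hlow : ∀ t, 0 ≤ t → t < s → 0 < Φ.lowP t)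
    (hhigh : ∀ t, s < t → Φ.lowP t ≤ 0) : Φ.Bdim = ENNReal.ofReal s := by
  refine le_antisymm (iSup_le fun ⟨t, _, ht⟩ => ENNReal.ofReal_le_ofReal ?_) ?_
  · by_contra! hst
    exact (hhigh t hst).not_gt ht
  · refine le_of_forall_lt fun r hr => ?_
    have hrs : r.toReal < s := (ENNReal.lt_ofReal_iff_toReal_lt hr.ne_top).1 hr
    obtain ⟨t, hrt, hts⟩ := exists_between hrs
    have ht : 0 ≤ t := ENNReal.toReal_nonneg.trans hrt.le
    calc r < ENNReal.ofReal t := (ENNReal.lt_ofReal_iff_toReal_lt hr.ne_top).2 hrt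
      _ ≤ Φ.Bdim := le_iSup (fun t : {t : ℝ // 0 ≤ t ∧ (0 : EReal) < Φ.lowP t} =>
          ENNReal.ofReal t.1) ⟨t, ht, hlow t ht hts⟩

lemma segN_eq_Dnorm (n : ℕ) (ω : Φ.Word n (n + 1)) :
    Φ.segN n (n + 1) ω = Φ.Dnorm n (ω ⟨n, by simp⟩) := by
  rw [Dnorm]
  congr 1
  funext ⟨j, hj⟩
  obtain rfl : j = n := by have := Finset.mem_Ico.mp hj; omega
  rfl

section Finite

variable {Φ} {n : ℕ} [Finite (Φ.I n)]

lemma cmin_le_Dnorm (i : Φ.I n) : Φ.cmin n ≤ Φ.Dnorm n i :=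
  ciInf_le (Set.finite_range _).bddBelow i

lemma Dnorm_le_cmax (i : Φ.I n) : Φ.Dnorm n i ≤ Φ.cmax n :=
  le_ciSup (Set.finite_range _).bddAbove i

variable (Φ n)

lemma cmin_pos : 0 < Φ.cmin n := by
  have := Φ.hI_ne n
  obtain ⟨i, hi⟩ := Finite.exists_min (Φ.Dnorm n)
  exact (Φ.segN_pos _ _ _).trans_le (le_ciInf hi)

lemma cmax_pos : 0 < Φ.cmax n :=
  (Φ.segN_pos _ _ _).trans_le (Dnorm_le_cmax (Classical.choice (Φ.hI_ne n)))

end Finite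

lemma exists_segN_split_last (n : ℕ) (ω : Φ.Word 0 (n + 1)) :
    ∃ (ω₁ : Φ.Word 0 n) (i : Φ.I n),
      Φ.segN 0 (n + 1) ω ≤ Φ.segN 0 n ω₁ * Φ.Dnorm n i ∧
        Φ.segN 0 n ω₁ * Φ.Dnorm n i ≤ Φ.K * Φ.segN 0 (n + 1) ω := by
  have hmem₁ (j : Finset.Ico 0 n) : (j : ℕ) ∈ Finset.Ico 0 (n + 1) :=
    Finset.mem_Ico.2 ⟨Nat.zero_le _, (Finset.mem_Ico.1 j.2).2.trans n.lt_succ_self⟩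
  have hmem₂ (j : Finset.Ico n (n + 1)) : (j : ℕ) ∈ Finset.Ico 0 (n + 1) :=
    Finset.mem_Ico.2 ⟨Nat.zero_le _, (Finset.mem_Ico.1 j.2).2⟩
  have hsplit := Φ.segN_split 0 n (n + 1) n.zero_le n.le_succ ω
    (fun j => ω ⟨j, hmem₁ j⟩) (fun j => ω ⟨j, hmem₂ j⟩)
    (fun _ _ _ => rfl) (fun _ _ _ => rfl)
  rw [segN_eq_Dnorm] at hsplit
  exact ⟨_, _, hsplit⟩

variable [∀ k, Finite (Φ.I k)]

lemma segN_le_prod_cmax (n : ℕ) (ω : Φ.Word 0 n) :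
    Φ.segN 0 n ω ≤ ∏ k ∈ Finset.range n, Φ.cmax k := by
  induction n with
  | zero => simpa using Φ.segN_contract 0 0 ω
  | succ n ih =>
    obtain ⟨ω₁, i, hle, -⟩ := Φ.exists_segN_split_last n ω
    rw [Finset.prod_range_succ]
    calc Φ.segN 0 (n + 1) ω ≤ Φ.segN 0 n ω₁ * Φ.Dnorm n i := hle
      _ ≤ (∏ k ∈ Finset.range n, Φ.cmax k) * Φ.cmax n :=
        mul_le_mul (ih ω₁) (Dnorm_le_cmax i) (Φ.segN_pos _ _ _).le
          (Finset.prod_nonneg fun k _ => (Φ.cmax_pos k).le)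

lemma prod_cmin_div_le_segN {n : ℕ} (hn : n ≠ 0) (ω : Φ.Word 0 n) :
    ∏ k ∈ Finset.range n, Φ.cmin k / Φ.K ≤ Φ.segN 0 n ω := by
  have hK : 0 < Φ.K := one_pos.trans_le Φ.hK
  obtain ⟨n, rfl⟩ := Nat.exists_eq_succ_of_ne_zero hn
  induction n with
  | zero =>
    rw [Finset.prod_range_one, segN_eq_Dnorm]
    exact (div_le_self (Φ.cmin_pos 0).le Φ.hK).trans (cmin_le_Dnorm _)
  | succ n ih =>
    obtain ⟨ω₁, i, -, hle⟩ := Φ.exists_segN_split_last (n + 1) ω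
    calc ∏ k ∈ Finset.range (n + 2), Φ.cmin k / Φ.K
        = (∏ k ∈ Finset.range (n + 1), Φ.cmin k / Φ.K) * Φ.cmin (n + 1) / Φ.K := by
          rw [Finset.prod_range_succ, mul_div_assoc]
      _ ≤ Φ.segN 0 (n + 1) ω₁ * Φ.Dnorm (n + 1) i / Φ.K := by
          gcongr
          exacts [(Φ.cmin_pos _).le, (Φ.segN_pos _ _ _).le, ih n.succ_ne_zero ω₁,
            cmin_le_Dnorm i]
      _ ≤ Φ.segN 0 (n + 2) ω := (div_le_iff₀' hK).2 hle

lemma natCard_word (n : ℕ) :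
    Nat.card (Φ.Word 0 n) = ∏ k ∈ Finset.range n, Nat.card (Φ.I k) := by
  have := fun k => Fintype.ofFinite (Φ.I k)
  rw [Nat.card_pi, Finset.range_eq_Ico]
  exact Finset.prod_coe_sort (Finset.Ico 0 n) fun k => Nat.card (Φ.I k)

lemma exp_sum_log_natCard_add_mul_log {c : ℕ → ℝ} (hc : ∀ k, 0 < c k) (n : ℕ) (t : ℝ) :
    Real.exp (∑ k ∈ Finset.range n, (Real.log (Nat.card (Φ.I k)) + t * Real.log (c k))) =
      Nat.card (Φ.Word 0 n) * (∏ k ∈ Finset.range n, c k) ^ t := by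
  have hcard (k : ℕ) : (0 : ℝ) < Nat.card (Φ.I k) := by
    have := Φ.hI_ne k
    exact_mod_cast Nat.card_pos
  rw [Real.exp_sum, Finset.prod_congr rfl fun k _ => by
    rw [Real.exp_add, Real.exp_log (hcard k), mul_comm t, Real.exp_mul, Real.exp_log (hc k)],
    Finset.prod_mul_distrib, Real.finsetProd_rpow _ _ fun k _ => (hc k).le, Φ.natCard_word,
    Nat.cast_prod]

variable {Φ} {n : ℕ} {t p : ℝ}

lemma Z_le_of_segN_le (ht : 0 ≤ t) (hp : ∀ ω : Φ.Word 0 n, Φ.segN 0 n ω ≤ p) :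
    Φ.Z n t ≤ ENNReal.ofReal (Nat.card (Φ.Word 0 n) * p ^ t) := by
  calc Φ.Z n t ≤ ∑' _ : Φ.Word 0 n, ENNReal.ofReal (p ^ t) :=
        ENNReal.tsum_le_tsum fun ω =>
          ENNReal.ofReal_le_ofReal (Real.rpow_le_rpow (Φ.segN_pos _ _ _).le (hp ω) ht)
    _ = ENNReal.ofReal (Nat.card (Φ.Word 0 n) * p ^ t) := ENNReal.tsum_ofReal_const _ _

lemma le_Z_of_le_segN (ht : 0 ≤ t) (hp0 : 0 ≤ p)
    (hp : ∀ ω : Φ.Word 0 n, p ≤ Φ.segN 0 n ω) :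
    ENNReal.ofReal (Nat.card (Φ.Word 0 n) * p ^ t) ≤ Φ.Z n t := by
  calc ENNReal.ofReal (Nat.card (Φ.Word 0 n) * p ^ t)
        = ∑' _ : Φ.Word 0 n, ENNReal.ofReal (p ^ t) := (ENNReal.tsum_ofReal_const _ _).symm
    _ ≤ Φ.Z n t := ENNReal.tsum_le_tsum fun ω =>
          ENNReal.ofReal_le_ofReal (Real.rpow_le_rpow hp0 (hp ω) ht)

variable (Φ)

lemma tendsto_log_cmin_div {c : ℝ}
    (hbal : Tendsto (fun n : ℕ => Real.log (Φ.ρ n) / n) atTop (𝓝 0))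
    (hcmax : Tendsto (fun n : ℕ => Real.log (Φ.cmax n) / n) atTop (𝓝 c)) :
    Tendsto (fun n : ℕ => Real.log (Φ.cmin n) / n) atTop (𝓝 c) := by
  refine (by simpa using hcmax.sub hbal : Tendsto _ atTop (𝓝 c)).congr fun n => ?_
  rw [ρ, Real.log_div (Φ.cmax_pos n).ne' (Φ.cmin_pos n).ne']
  ring

lemma Z_le_ofReal_exp (ht : 0 ≤ t) (n : ℕ) :
    Φ.Z n t ≤ ENNReal.ofReal (Real.exp
      (∑ k ∈ Finset.range n, (Real.log (Nat.card (Φ.I k)) + t * Real.log (Φ.cmax k)))) := by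
  rw [Φ.exp_sum_log_natCard_add_mul_log fun k => Φ.cmax_pos k]
  exact Z_le_of_segN_le ht (Φ.segN_le_prod_cmax n)

lemma ofReal_exp_le_Z (ht : 0 ≤ t) (hn : n ≠ 0) :
    ENNReal.ofReal (Real.exp (∑ k ∈ Finset.range n,
      (Real.log (Nat.card (Φ.I k)) + t * Real.log (Φ.cmin k / Φ.K)))) ≤ Φ.Z n t := by
  have hK : 0 < Φ.K := one_pos.trans_le Φ.hK
  rw [Φ.exp_sum_log_natCard_add_mul_log fun k => div_pos (Φ.cmin_pos k) hK]
  exact le_Z_of_le_segN ht (Finset.prod_nonneg fun k _ => div_nonneg (Φ.cmin_pos k).le hK.le)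
    (Φ.prod_cmin_div_le_segN hn)

lemma tendsto_Z_top_and_lowP_eq_top {a c : ℝ}
    (hcard : Tendsto (fun k : ℕ => Real.log (Nat.card (Φ.I k)) / k) atTop (𝓝 a))
    (hcmin : Tendsto (fun k : ℕ => Real.log (Φ.cmin k) / k) atTop (𝓝 c))
    (ht : 0 ≤ t) (hpos : 0 < a + t * c) :
    Tendsto (fun n => Φ.Z n t) atTop (𝓝 ⊤) ∧ Φ.lowP t = ⊤ := by
  have hK : 0 < Φ.K := one_pos.trans_le Φ.hK
  have hrate : Tendsto (fun k : ℕ =>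
      (Real.log (Nat.card (Φ.I k)) + t * Real.log (Φ.cmin k / Φ.K)) / k) atTop
      (𝓝 (a + t * c)) := by
    have hlogK := tendsto_const_div_atTop_nhds_zero_nat (Real.log Φ.K)
    have := hcard.add ((hcmin.sub hlogK).const_mul t)
    rw [sub_zero] at this
    refine this.congr fun k => ?_
    rw [Real.log_div (Φ.cmin_pos k).ne' hK.ne']
    ring
  have hsum := tendsto_sum_range_div_atTop_of_tendsto_div hpos hrate
  have hZ := (eventually_ne_atTop 0).mono fun n hn => Φ.ofReal_exp_le_Z ht hn
  exact ⟨ENNReal.tendsto_nhds_top_of_ofReal_exp_le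
    (tendsto_atTop_of_tendsto_div_natCast_atTop hsum) hZ,
    ENNReal.liminf_log_mul_inv_eq_top hsum hZ⟩

lemma tendsto_Z_zero_and_lowP_eq_bot {a c : ℝ}
    (hcard : Tendsto (fun k : ℕ => Real.log (Nat.card (Φ.I k)) / k) atTop (𝓝 a))
    (hcmax : Tendsto (fun k : ℕ => Real.log (Φ.cmax k) / k) atTop (𝓝 c))
    (ht : 0 ≤ t) (hneg : a + t * c < 0) :
    Tendsto (fun n => Φ.Z n t) atTop (𝓝 0) ∧ Φ.lowP t = ⊥ := by
  have hrate : Tendsto (fun k : ℕ =>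
      (Real.log (Nat.card (Φ.I k)) + t * Real.log (Φ.cmax k)) / k) atTop (𝓝 (a + t * c)) :=
    (hcard.add (hcmax.const_mul t)).congr fun k => by ring
  have hsum := tendsto_sum_range_div_atBot_of_tendsto_div hneg hrate
  have hZ := Eventually.of_forall (f := atTop) (Φ.Z_le_ofReal_exp ht)
  exact ⟨ENNReal.tendsto_nhds_zero_of_le_ofReal_exp
    (tendsto_atBot_of_tendsto_div_natCast_atBot hsum) hZ,
    ENNReal.liminf_log_mul_inv_eq_bot hsum hZ⟩

end NCIFS

/-- (Regular exponential growth.) Let `Φ` be a weakly balanced finite NCIFS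
such that `a = lim (1/n) log #I^{(n)}` and `b = lim (1/n) log(1/c̄_n)` exist, finite and
positive. Then `B(Φ) = a/b`: indeed `Z_n(t) → ∞` for `0 ≤ t < a/b` and `Z_n(t) → 0` for
`t > a/b`. -/
theorem NCIFS.bowen_dim_regular_growth {d : ℕ} (Φ : NCIFS d) [∀ n, Finite (Φ.I n)]
    (hbal : Tendsto (fun n : ℕ => Real.log (Φ.ρ n) / n) atTop (𝓝 0))
    (a b : ℝ) (ha : 0 < a) (hb : 0 < b)
    (hlima : Tendsto (fun n : ℕ => Real.log (Nat.card (Φ.I n)) / n) atTop (𝓝 a))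
    (hlimb : Tendsto (fun n : ℕ => Real.log (1 / Φ.cmax n) / n) atTop (𝓝 b)) :
    (∀ t : ℝ, 0 ≤ t → t < a / b → Tendsto (fun n => Φ.Z n t) atTop (𝓝 ⊤)) ∧
    (∀ t : ℝ, a / b < t → Tendsto (fun n => Φ.Z n t) atTop (𝓝 0)) ∧
    Φ.Bdim = ENNReal.ofReal (a / b) := by
  have hcmax : Tendsto (fun n : ℕ => Real.log (Φ.cmax n) / n) atTop (𝓝 (-b)) := by
    simpa only [one_div, Real.log_inv, neg_div, neg_neg] using hlimb.neg
  have below (t : ℝ) (ht : 0 ≤ t) (htab : t < a / b) :=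
    Φ.tendsto_Z_top_and_lowP_eq_top hlima (Φ.tendsto_log_cmin_div hbal hcmax) ht
      (by linarith [(lt_div_iff₀ hb).1 htab])
  have above (t : ℝ) (htab : a / b < t) :=
    Φ.tendsto_Z_zero_and_lowP_eq_bot hlima hcmax ((div_pos ha hb).le.trans htab.le)
      (by linarith [(div_lt_iff₀ hb).1 htab])
  refine ⟨fun t ht htab => (below t ht htab).1, fun t htab => (above t htab).1,
    Φ.Bdim_eq_ofReal (fun t ht htab => ?_) (fun t htab => ?_)⟩
  · simp [(below t ht htab).2]
  · simp [(above t htab).2]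
end
end
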